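/- (Lemma 2 of the paper.) Let T > 0, let (Ω, 𝔽, μ) be a probability space, and let X : Ω → (ℝ → ℝ) be such that for every ω, X ω restricted to [0,T] is continuously differentiable, the map (ω,t) ↦ (X ω)'(t) is jointly measurable, and there is a constant M with |(X ω)'(t)| ≤ M for all ω and t ∈ [0,T]. Let (X_n)_{n≥1} be an i.i.d. sequence of copies of X. For ε > 0 with K := T/ε ∈ ℕ and grid points t = ε, 2ε, …, T, define the divided differences X_n^{diff,ε}(t) := (X_n(t) − X_n(t−ε))/ε, and for each N the empirical quantity S_{N,ε} := (ε/T)∑_{t=ε,2ε,…,T} numstd[(X_n^{diff,ε}(t))_{n=1:N}]. Then almost surely, for every ε with T/ε ∈ ℕ the limit L_ε := lim_{N→∞} S_{N,ε} exists, and L_ε → MPGD as ε → 0 (along ε with T/ε ∈ ℕ). -/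

import Mathlib

open MeasureTheory ProbabilityTheory intervalIntegral Filter

/-- The mean point-wise gradient deviation of a random `C¹` function `X` on `[0,T]`:
`MPGD = (1/T)∫₀ᵀ √(E[((X·)'(t) − E[(X·)'(t)])²]) dt`, i.e. the time-average of the
point-wise standard deviation of the derivative. -/
noncomputable def MPGD {Ω : Type*} [MeasurableSpace Ω] (μ : Measure Ω)
    (T : ℝ) (X : Ω → ℝ → ℝ) : ℝ :=
  (1 / T) * ∫ t in (0:ℝ)..T,
    Real.sqrt (∫ ω, (deriv (X ω) t - ∫ ω', deriv (X ω') t ∂μ) ^ 2 ∂μ)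

/-- The numerical standard deviation of the finite tuple `(y 0, …, y (N-1))`:
`numstd[(y_n)] = √((1/N)∑_n (y_n − ȳ)²)` where `ȳ` is the arithmetic mean. -/
noncomputable def numstd (N : ℕ) (y : ℕ → ℝ) : ℝ :=
  Real.sqrt ((1 / (N : ℝ)) * ∑ n ∈ Finset.range N,
    (y n - (1 / (N : ℝ)) * ∑ j ∈ Finset.range N, y j) ^ 2)

/-! For a grid step `ε = T / K` and a cell `k`, the squared numerical standard deviation of the
divided differences is their empirical second moment minus their squared empirical mean, so the
strong law of large numbers, applied to the countably many pairs `(K, k)` at once, makes `S_{N,ε}`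
converge almost surely to `L ε = (ε/T) ∑_k std(X^{diff,ε}((k+1)ε))`.

`L ε` is `(1/T) ∫₀ᵀ` of the step function sending `t` to the standard deviation of the divided
difference over the cell containing `t`. By the mean value theorem that divided difference is
`X'(c)` for some `c` within `ε` of `t`, so it tends to `X'(t)`; everything being bounded by `M`,
dominated convergence, first in `ω` for the variances and then in `t`, gives `L ε → MPGD`. -/

open Set Topology

noncomputable def divDiff (f : ℝ → ℝ) (ε : ℝ) (k : ℕ) : ℝ :=
  (f (((k : ℝ) + 1) * ε) - f ((k : ℝ) * ε)) / ε

theorem measurable_divDiff (ε : ℝ) (k : ℕ) : Measurable fun f : ℝ → ℝ => divDiff f ε k := by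
  unfold divDiff
  fun_prop

theorem exists_deriv_eq_divDiff {f : ℝ → ℝ} (hf : Differentiable ℝ f) {ε : ℝ} (hε : 0 < ε)
    (k : ℕ) : ∃ c ∈ Ioo ((k : ℝ) * ε) ((k + 1) * ε), divDiff f ε k = deriv f c := by
  obtain ⟨c, hc, hslope⟩ := exists_deriv_eq_slope f (by nlinarith : (k : ℝ) * ε < (k + 1) * ε)
    hf.continuous.continuousOn hf.differentiableOn
  refine ⟨c, hc, ?_⟩
  rw [hslope, divDiff, add_mul, one_mul, add_sub_cancel_left]

theorem abs_divDiff_le {f : ℝ → ℝ} (hf : Differentiable ℝ f) {T M : ℝ}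
    (hM : ∀ t ∈ Icc 0 T, |deriv f t| ≤ M) {ε : ℝ} (hε : 0 < ε) {k : ℕ}
    (hk : ((k : ℝ) + 1) * ε ≤ T) : |divDiff f ε k| ≤ M := by
  obtain ⟨c, hc, hfc⟩ := exists_deriv_eq_divDiff hf hε k
  rw [hfc]
  exact hM c ⟨(by positivity : (0:ℝ) ≤ k * ε).trans hc.1.le, hc.2.le.trans hk⟩

theorem mem_Ico_floor_div_mul {ε t : ℝ} (hε : 0 < ε) (ht : 0 ≤ t) :
    t ∈ Ico ((⌊t / ε⌋₊ : ℝ) * ε) ((⌊t / ε⌋₊ + 1) * ε) := by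
  rw [mem_Ico, ← le_div_iff₀ hε, ← div_lt_iff₀ hε]
  exact ⟨Nat.floor_le (by positivity), Nat.lt_floor_add_one _⟩

theorem tendsto_divDiff_floor {f : ℝ → ℝ} (hf : Differentiable ℝ f) {t : ℝ} (ht : 0 ≤ t)
    (hcont : ContinuousAt (deriv f) t) :
    Tendsto (fun ε => divDiff f ε ⌊t / ε⌋₊) (𝓝[>] 0) (𝓝 (deriv f t)) := by
  have hcell : ∀ ε > 0, ∃ c, |c - t| ≤ ε ∧ divDiff f ε ⌊t / ε⌋₊ = deriv f c := by
    intro ε hε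
    obtain ⟨c, hc, hfc⟩ := exists_deriv_eq_divDiff hf hε ⌊t / ε⌋₊
    have htc := mem_Ico_floor_div_mul hε ht
    exact ⟨c, abs_sub_le_iff.2 ⟨by linarith [hc.2, htc.1], by linarith [hc.1, htc.2]⟩, hfc⟩
  choose! c hct hfc using hcell
  have hc : Tendsto c (𝓝[>] 0) (𝓝 t) := by
    refine tendsto_iff_norm_sub_tendsto_zero.2 (squeeze_zero' (.of_forall fun _ => norm_nonneg _)
      (eventually_mem_nhdsWithin.mono fun ε hε => hct ε hε) ?_)
    exact tendsto_nhdsWithin_of_tendsto_nhds tendsto_id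
  exact (hcont.tendsto.comp hc).congr' (eventually_mem_nhdsWithin.mono fun ε hε => (hfc ε hε).symm)

theorem integral_comp_floor_div (W : ℕ → ℝ) {ε : ℝ} (hε : 0 < ε) (K : ℕ) :
    ∫ t in (0 : ℝ)..K * ε, W ⌊t / ε⌋₊ = ε * ∑ k ∈ Finset.range K, W k := by
  have hcell (k : ℕ) : EqOn (fun t => W ⌊t / ε⌋₊) (fun _ => W k)
      (uIoo ((k : ℝ) * ε) ((k + 1 : ℕ) * ε)) := by
    intro t ht
    rw [uIoo_of_le (by gcongr; omega), mem_Ioo, ← div_lt_iff₀ hε, ← lt_div_iff₀ hε] at ht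
    simp only
    rw [(Nat.floor_eq_iff (by nlinarith [ht.1])).2 ⟨ht.1.le, by exact_mod_cast ht.2⟩]
  have := intervalIntegral.sum_integral_adjacent_intervals (a := fun k : ℕ => (k : ℝ) * ε)
    (μ := volume) (n := K) fun k _ => intervalIntegrable_const.congr_uIoo (hcell k).symm
  simp only [Nat.cast_zero, zero_mul] at this
  rw [← this, Finset.mul_sum]
  refine Finset.sum_congr rfl fun k _ => ?_
  rw [intervalIntegral.integral_congr_uIoo (hcell k), intervalIntegral.integral_const, smul_eq_mul]
  push_cast
  ring

theorem numstd_eq_sqrt (N : ℕ) (y : ℕ → ℝ) :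
    numstd N y =
      √((∑ n ∈ Finset.range N, y n ^ 2) / N - ((∑ n ∈ Finset.range N, y n) / N) ^ 2) := by
  rcases N.eq_zero_or_pos with rfl | hN
  · simp [numstd]
  · have hN' : (N : ℝ) ≠ 0 := by positivity
    simp only [numstd, sub_sq, Finset.sum_add_distrib, Finset.sum_sub_distrib, ← Finset.mul_sum,
      ← Finset.sum_mul, Finset.sum_const, Finset.card_range, nsmul_eq_mul]
    congr 1
    field_simp
    ring

theorem tendsto_numstd {y : ℕ → ℝ} {m q : ℝ}
    (hm : Tendsto (fun N : ℕ => (∑ n ∈ Finset.range N, y n) / N) atTop (𝓝 m))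
    (hq : Tendsto (fun N : ℕ => (∑ n ∈ Finset.range N, y n ^ 2) / N) atTop (𝓝 q)) :
    Tendsto (fun N => numstd N y) atTop (𝓝 √(q - m ^ 2)) := by
  simpa only [numstd_eq_sqrt] using (hq.sub (hm.pow 2)).sqrt

section IID

variable {Ω E : Type*} [MeasurableSpace Ω] [MeasurableSpace E] {μ : Measure Ω}
  {Xs : ℕ → Ω → E} {X : Ω → E} {G : E → ℝ}

theorem ae_tendsto_avg_comp (hindep : iIndepFun Xs μ) (hident : ∀ n, IdentDistrib (Xs n) X μ μ)
    (hG : Measurable G) (hint : Integrable (fun ω => G (X ω)) μ) :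
    ∀ᵐ ω ∂μ, Tendsto (fun N : ℕ => (∑ n ∈ Finset.range N, G (Xs n ω)) / N) atTop
      (𝓝 (∫ ω, G (X ω) ∂μ)) := by
  have hidentG (n : ℕ) : IdentDistrib (fun ω => G (Xs n ω)) (fun ω => G (X ω)) μ μ :=
    (hident n).comp hG
  have := strong_law_ae_real (fun n ω => G (Xs n ω)) ((hidentG 0).integrable_iff.2 hint)
    (fun i j hij => (hindep.comp (fun _ => G) fun _ => hG).indepFun hij)
    (fun n => (hidentG n).trans (hidentG 0).symm)
  rwa [(hidentG 0).integral_eq] at this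

theorem ae_tendsto_numstd_comp [IsProbabilityMeasure μ] (hindep : iIndepFun Xs μ)
    (hident : ∀ n, IdentDistrib (Xs n) X μ μ) (hG : Measurable G)
    (hL2 : MemLp (fun ω => G (X ω)) 2 μ) :
    ∀ᵐ ω ∂μ, Tendsto (fun N => numstd N fun n => G (Xs n ω)) atTop
      (𝓝 √(variance (fun ω => G (X ω)) μ)) := by
  filter_upwards [ae_tendsto_avg_comp hindep hident hG (hL2.integrable one_le_two),
    ae_tendsto_avg_comp hindep hident (hG.pow_const 2) hL2.integrable_sq] with ω hm hq
  rw [variance_eq_sub hL2]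
  exact tendsto_numstd hm hq

end IID

theorem tendsto_variance_of_tendsto_of_abs_le {Ω ι : Type*} [MeasurableSpace Ω] {μ : Measure Ω}
    [IsProbabilityMeasure μ] {l : Filter ι} [l.NeBot] [l.IsCountablyGenerated]
    {F : ι → Ω → ℝ} {f : Ω → ℝ} {C : ℝ} (hF_meas : ∀ i, AEStronglyMeasurable (F i) μ)
    (hF_bound : ∀ᶠ i in l, ∀ ω, |F i ω| ≤ C)
    (hlim : ∀ᵐ ω ∂μ, Tendsto (fun i => F i ω) l (𝓝 (f ω))) :
    Tendsto (fun i => variance (F i) μ) l (𝓝 (variance f μ)) := by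
  have hf_bound : ∀ᵐ ω ∂μ, ‖f ω‖ ≤ C := by
    filter_upwards [hlim] with ω hω
    exact le_of_tendsto hω.abs (hF_bound.mono fun i hi => hi ω)
  have hF_bound' : ∀ᶠ i in l, ∀ᵐ ω ∂μ, ‖F i ω‖ ≤ C :=
    hF_bound.mono fun i hi => .of_forall hi
  have hf_meas := aestronglyMeasurable_of_tendsto_ae l hF_meas hlim
  have hmean := tendsto_integral_filter_of_dominated_convergence (fun _ => C)
    (.of_forall hF_meas) hF_bound' (integrable_const C) hlim
  have hF_sq_bound : ∀ᶠ i in l, ∀ᵐ ω ∂μ, ‖(F i ^ 2) ω‖ ≤ C ^ 2 := by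
    refine hF_bound.mono fun i hi => .of_forall fun ω => ?_
    rw [Pi.pow_apply, Real.norm_eq_abs, abs_pow]
    exact pow_le_pow_left₀ (abs_nonneg _) (hi ω) 2
  have hsq := tendsto_integral_filter_of_dominated_convergence (fun _ => C ^ 2)
    (.of_forall fun i => (hF_meas i).pow 2) hF_sq_bound (integrable_const _)
    (hlim.mono fun ω hω => hω.pow 2)
  rw [variance_eq_sub (.of_bound hf_meas C hf_bound)]
  refine (hsq.sub (hmean.pow 2)).congr' (hF_bound'.mono fun i hi => ?_)
  exact (variance_eq_sub (.of_bound (hF_meas i) C hi)).symm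

theorem abs_divDiff_grid_le {f : ℝ → ℝ} (hf : Differentiable ℝ f) {T M : ℝ} (hT : 0 < T)
    (hM : ∀ t ∈ Icc 0 T, |deriv f t| ≤ M) {K k : ℕ} (hk : k < K) :
    |divDiff f (T / K) k| ≤ M := by
  have hK : (K : ℝ) ≠ 0 := by exact_mod_cast (Nat.zero_lt_of_lt hk).ne'
  have hε : 0 < T / K := div_pos hT (by positivity)
  refine abs_divDiff_le hf hM hε ?_
  calc ((k : ℝ) + 1) * (T / K) ≤ K * (T / K) := by gcongr; exact_mod_cast hk
    _ = T := by field_simp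

theorem abs_divDiff_floor_le {f : ℝ → ℝ} (hf : Differentiable ℝ f) {T M : ℝ}
    (hM : ∀ t ∈ Icc 0 T, |deriv f t| ≤ M) {K : ℕ} (hK : 0 < K) {t : ℝ} (ht : t ∈ Ico 0 T) :
    |divDiff f (T / K) ⌊t / (T / K)⌋₊| ≤ M := by
  have hT : 0 < T := ht.1.trans_lt ht.2
  have hε : 0 < T / K := by positivity
  refine abs_divDiff_grid_le hf hT hM ?_
  rw [Nat.floor_lt (div_nonneg ht.1 hε.le), div_lt_iff₀ hε]
  field_simp
  exact ht.2

noncomputable def meanDivDiffStd {Ω : Type*} [MeasurableSpace Ω] (μ : Measure Ω) (T : ℝ)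
    (X : Ω → ℝ → ℝ) (ε : ℝ) : ℝ :=
  ε / T * ∑ k ∈ Finset.range ⌊T / ε⌋₊, √(variance (fun ω => divDiff (X ω) ε k) μ)

section RandomFunction

variable {Ω : Type*} [MeasurableSpace Ω] {μ : Measure Ω} {T M : ℝ} {X : Ω → ℝ → ℝ}

theorem meanDivDiffStd_eq_integral (hT : 0 < T) {K : ℕ} (hK : 0 < K) :
    meanDivDiffStd μ T X (T / K) = 1 / T * ∫ t in (0 : ℝ)..T,
      √(variance (fun ω => divDiff (X ω) (T / K) ⌊t / (T / K)⌋₊) μ) := by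
  have hε : 0 < T / K := by positivity
  have hcells := integral_comp_floor_div
    (fun k => √(variance (fun ω => divDiff (X ω) (T / K) k) μ)) hε K
  rw [show (K : ℝ) * (T / K) = T by field_simp] at hcells
  rw [hcells, meanDivDiffStd, show T / (T / K) = K by field_simp, Nat.floor_natCast]
  ring

theorem MPGD_eq_integral_sqrt_variance
    (hderiv_meas : ∀ t, AEMeasurable (fun ω => deriv (X ω) t) μ) :
    MPGD μ T X = 1 / T * ∫ t in (0 : ℝ)..T, √(variance (fun ω => deriv (X ω) t) μ) := by
  simp only [MPGD, variance_eq_integral (hderiv_meas _)]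

variable [IsProbabilityMeasure μ]

theorem tendsto_variance_divDiff_floor (hXmeas : AEMeasurable X μ)
    (hC1 : ∀ ω, ContDiff ℝ 1 (X ω)) (hM : ∀ ω, ∀ t ∈ Icc 0 T, |deriv (X ω) t| ≤ M)
    {t : ℝ} (ht : t ∈ Ico 0 T) :
    Tendsto (fun K : ℕ => variance (fun ω => divDiff (X ω) (T / K) ⌊t / (T / K)⌋₊) μ) atTop
      (𝓝 (variance (fun ω => deriv (X ω) t) μ)) := by
  have hgrid : Tendsto (fun K : ℕ => T / K) atTop (𝓝[>] 0) :=
    tendsto_nhdsWithin_iff.2 ⟨tendsto_const_div_atTop_nhds_zero_nat T,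
      (eventually_gt_atTop 0).mono fun K hK => div_pos (ht.1.trans_lt ht.2) (Nat.cast_pos.2 hK)⟩
  refine tendsto_variance_of_tendsto_of_abs_le (C := M)
    (fun K => ((measurable_divDiff _ _).comp_aemeasurable hXmeas).aestronglyMeasurable)
    ((eventually_gt_atTop 0).mono fun K hK ω =>
      abs_divDiff_floor_le ((hC1 ω).differentiable one_ne_zero) (hM ω) hK ht)
    (.of_forall fun ω => ?_)
  exact (tendsto_divDiff_floor ((hC1 ω).differentiable one_ne_zero) ht.1
    ((hC1 ω).continuous_deriv le_rfl).continuousAt).comp hgrid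

theorem tendsto_meanDivDiffStd_MPGD (hT : 0 < T) (hXmeas : AEMeasurable X μ)
    (hC1 : ∀ ω, ContDiff ℝ 1 (X ω)) (hderiv_meas : ∀ t, AEMeasurable (fun ω => deriv (X ω) t) μ)
    (hM : ∀ ω, ∀ t ∈ Icc 0 T, |deriv (X ω) t| ≤ M) :
    Tendsto (fun K : ℕ => meanDivDiffStd μ T X (T / K)) atTop (𝓝 (MPGD μ T X)) := by
  rw [MPGD_eq_integral_sqrt_variance hderiv_meas]
  refine Tendsto.congr' ((eventually_gt_atTop 0).mono fun K hK =>
    (meanDivDiffStd_eq_integral hT hK).symm) (tendsto_const_nhds.mul ?_)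
  refine intervalIntegral.tendsto_integral_filter_of_dominated_convergence (fun _ => |M|)
    (.of_forall fun K => ?_) ?_ intervalIntegrable_const ?_
  · have hcell : Measurable fun t : ℝ => ⌊t / (T / K)⌋₊ :=
      Nat.measurable_floor.comp (measurable_div_const _)
    exact ((measurable_from_nat
      (f := fun k => √(variance (fun ω => divDiff (X ω) (T / K) k) μ))).comp
        hcell).aestronglyMeasurable
  · filter_upwards [eventually_gt_atTop 0] with K hK
    -- at `t = T` the cell `[T, T + ε)` leaves `[0, T]`, where `X'` is not controlled
    filter_upwards [Measure.ae_ne volume T] with t htT ht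
    rw [uIoc_of_le hT.le] at ht
    have ht' : t ∈ Ico 0 T := ⟨ht.1.le, lt_of_le_of_ne ht.2 htT⟩
    have hvar := variance_le_sq_of_bounded (a := -M) (b := M) (.of_forall fun ω => abs_le.1
        (abs_divDiff_floor_le ((hC1 ω).differentiable one_ne_zero) (hM ω) hK ht'))
      ((measurable_divDiff _ _).comp_aemeasurable hXmeas)
    rw [Real.norm_of_nonneg (Real.sqrt_nonneg _), ← Real.sqrt_sq_eq_abs]
    exact Real.sqrt_le_sqrt (hvar.trans_eq (by ring))
  · filter_upwards [Measure.ae_ne volume T] with t htT ht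
    rw [uIoc_of_le hT.le] at ht
    exact (tendsto_variance_divDiff_floor hXmeas hC1 hM ⟨ht.1.le, lt_of_le_of_ne ht.2 htT⟩).sqrt

theorem ae_tendsto_numstd_divDiff (hT : 0 < T) (hXmeas : AEMeasurable X μ)
    (hC1 : ∀ ω, ContDiff ℝ 1 (X ω)) (hM : ∀ ω, ∀ t ∈ Icc 0 T, |deriv (X ω) t| ≤ M)
    {Xs : ℕ → Ω → ℝ → ℝ} (hindep : iIndepFun Xs μ) (hident : ∀ n, IdentDistrib (Xs n) X μ μ) :
    ∀ᵐ ω ∂μ, ∀ K k : ℕ, k < K →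
      Tendsto (fun N => numstd N fun n => divDiff (Xs n ω) (T / K) k) atTop
        (𝓝 √(variance (fun ω => divDiff (X ω) (T / K) k) μ)) := by
  simp only [ae_all_iff]
  intro K k hk
  have hbound (ω : Ω) : ‖divDiff (X ω) (T / K) k‖ ≤ M :=
    abs_divDiff_grid_le ((hC1 ω).differentiable one_ne_zero) hT (hM ω) hk
  exact ae_tendsto_numstd_comp (G := fun f => divDiff f (T / K) k) hindep hident
    (measurable_divDiff _ _) (.of_bound ((measurable_divDiff _ _).comp_aemeasurable
      hXmeas).aestronglyMeasurable M (.of_forall hbound))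

end RandomFunction

theorem eq_div_of_natCast_mul_eq {T ε : ℝ} {K : ℕ} (hT : 0 < T) (h : (K : ℝ) * ε = T) :
    ε = T / K := by
  rw [eq_div_iff (by rintro hK; rw [hK, zero_mul] at h; linarith), mul_comm, h]

theorem exists_forall_grid_abs_sub_lt {g : ℝ → ℝ} {T a : ℝ} (hT : 0 < T)
    (hg : Tendsto (fun K : ℕ => g (T / K)) atTop (𝓝 a)) {δ : ℝ} (hδ : 0 < δ) :
    ∃ ε₀ > 0, ∀ ε : ℝ, 0 < ε → ε < ε₀ → ∀ K : ℕ, (K : ℝ) * ε = T → |g ε - a| < δ := by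
  obtain ⟨K₀, hK₀⟩ := Metric.tendsto_atTop.1 hg δ hδ
  refine ⟨T / (K₀ + 1), by positivity, fun ε hε hεK₀ K hKε => ?_⟩
  have hK : (K₀ : ℝ) + 1 < K := by
    rw [lt_div_iff₀ (by positivity)] at hεK₀
    nlinarith
  obtain rfl := eq_div_of_natCast_mul_eq hT hKε
  rw [← Real.dist_eq]
  exact hK₀ K (by exact_mod_cast (by linarith : (K₀ : ℝ) ≤ K))

/-- **Lemma 2 of the paper.** Let `T > 0`, `(Ω, μ)` a probability space and
`X : Ω → (ℝ → ℝ)` a random continuously differentiable function with jointly measurable and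
uniformly bounded derivative on `[0,T]`, and let `(Xs n)` be an i.i.d. sequence of copies of
`X` (as random variables with values in `ℝ → ℝ`, with the product σ-algebra). For a step `ε`
with `T/ε = K ∈ ℕ` and grid points `t = ε, 2ε, …, T`, consider the empirical quantity
`S_{N,ε} = (ε/T) ∑_t numstd[((Xs n ω t − Xs n ω (t−ε))/ε)_{n=1:N}]`. Then almost surely,
for every admissible `ε` the limit `L ε = lim_{N→∞} S_{N,ε}` exists, and `L ε → MPGD` as
`ε → 0` along steps with `T/ε ∈ ℕ`. -/
theorem statement13 {Ω : Type*} [MeasurableSpace Ω] (μ : Measure Ω) [IsProbabilityMeasure μ]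
    (T : ℝ) (hT : 0 < T) (X : Ω → ℝ → ℝ)
    (hC1 : ∀ ω, ContDiff ℝ 1 (X ω))
    (hmeas : Measurable fun p : Ω × ℝ => deriv (X p.1) p.2)
    (M : ℝ) (hM : ∀ ω, ∀ t ∈ Set.Icc (0:ℝ) T, |deriv (X ω) t| ≤ M)
    (Xs : ℕ → Ω → ℝ → ℝ)
    (hindep : iIndepFun Xs μ)
    (hident : ∀ n, IdentDistrib (Xs n) X μ μ) :
    ∀ᵐ ω ∂μ, ∃ L : ℝ → ℝ,
      (∀ ε : ℝ, ∀ K : ℕ, 0 < ε → (K : ℝ) * ε = T →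
        Tendsto (fun N : ℕ => (ε / T) * ∑ k ∈ Finset.range K,
            numstd N (fun n => (Xs n ω (((k : ℝ) + 1) * ε) - Xs n ω ((k : ℝ) * ε)) / ε))
          atTop (nhds (L ε))) ∧
      (∀ δ > 0, ∃ ε₀ > 0, ∀ ε : ℝ, 0 < ε → ε < ε₀ → ∀ K : ℕ, (K : ℝ) * ε = T →
        |L ε - MPGD μ T X| < δ) := by
  have hXmeas : AEMeasurable X μ := (hident 0).aemeasurable_snd
  have hderiv_meas (t : ℝ) : AEMeasurable (fun ω => deriv (X ω) t) μ :=
    (hmeas.comp (measurable_id.prodMk measurable_const)).aemeasurable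
  filter_upwards [ae_tendsto_numstd_divDiff hT hXmeas hC1 hM hindep hident] with ω hω
  refine ⟨meanDivDiffStd μ T X, fun ε K _ hKε => ?_, fun δ hδ =>
    exists_forall_grid_abs_sub_lt hT (tendsto_meanDivDiffStd_MPGD hT hXmeas hC1 hderiv_meas hM) hδ⟩
  obtain rfl := eq_div_of_natCast_mul_eq hT hKε
  rw [meanDivDiffStd, show T / (T / K) = K by field_simp, Nat.floor_natCast]
  exact (tendsto_finsetSum _ fun k hk => hω K k (Finset.mem_range.1 hk)).const_mul _
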